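/- The power series θ(x) = 4 Σ_{i≥2} (3i−3)!/((i−2)! · i!²) x^i and Φ(x) = Σ_{i≥2} (3i−3)!/((i−1)!² · i!) x^i satisfy the identity 3θ(x) = 2(27x−1)Φ'(x) − 42Φ(x) + 12x. -/

import Mathlib

open PowerSeries

/-- The formal power series `θ(x) = 4 Σ_{i≥2} (3i-3)!/((i-2)! i!²) x^i`. -/
noncomputable def thetaPS : PowerSeries ℚ :=
  PowerSeries.mk fun i =>
    if 2 ≤ i then 4 * ((3 * i - 3).factorial : ℚ) / ((i - 2).factorial * (i.factorial) ^ 2)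
    else 0

/-- The formal power series `Φ(x) = Σ_{i≥2} (3i-3)!/((i-1)!² i!) x^i`. -/
noncomputable def PhiPS : PowerSeries ℚ :=
  PowerSeries.mk fun i =>
    if 2 ≤ i then ((3 * i - 3).factorial : ℚ) / (((i - 1).factorial) ^ 2 * i.factorial)
    else 0

/-!
Compare coefficients. Writing `φₙ` for the coefficients of `Φ`, for `n ≥ 2` one has
`n θₙ = 4 (n - 1) φₙ` and `n (n + 1) φₙ₊₁ = 3 (3n - 1)(3n - 2) φₙ`, so the coefficient of `xⁿ`
reduces to the polynomial identity `12 (n - 1) = (54 n - 42) n - 6 (3n - 1)(3n - 2)`.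
The coefficients of `x⁰` and `x¹` are checked directly.
-/

theorem PowerSeries.coeff_X_mul_derivative {R : Type*} [CommSemiring R] (f : R⟦X⟧) (n : ℕ) :
    coeff n (X * d⁄dX R f) = coeff n f * n := by
  cases n with
  | zero => simp
  | succ n => rw [coeff_succ_X_mul, coeff_derivative]; push_cast; rfl

theorem coeff_thetaPS_add_two (m : ℕ) :
    coeff (m + 2) thetaPS = 4 * (3 * m + 3).factorial / (m.factorial * (m + 2).factorial ^ 2) := by
  simp [thetaPS, show 3 * (m + 2) - 3 = 3 * m + 3 by omega]

theorem coeff_PhiPS_add_two (m : ℕ) :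
    coeff (m + 2) PhiPS = (3 * m + 3).factorial / ((m + 1).factorial ^ 2 * (m + 2).factorial) := by
  simp [PhiPS, show 3 * (m + 2) - 3 = 3 * m + 3 by omega]

theorem add_two_mul_coeff_thetaPS (m : ℕ) :
    (m + 2) * coeff (m + 2) thetaPS = 4 * (m + 1) * coeff (m + 2) PhiPS := by
  rw [coeff_thetaPS_add_two, coeff_PhiPS_add_two]
  push_cast [Nat.factorial_succ]
  field_simp
  ring

theorem add_two_mul_coeff_PhiPS_succ (m : ℕ) :
    (m + 2) * ((m + 3) * coeff (m + 3) PhiPS) =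
      3 * (3 * m + 5) * (3 * m + 4) * coeff (m + 2) PhiPS := by
  rw [coeff_PhiPS_add_two (m + 1), coeff_PhiPS_add_two m]
  push_cast [show 3 * (m + 1) + 3 = 3 * m + 3 + 3 by ring, Nat.factorial_succ]
  field_simp
  ring

/-- `3θ(x) = 2(27x-1)Φ'(x) - 42Φ(x) + 12x`. -/
theorem stmt14 :
    3 * thetaPS = 2 * (27 * X - 1) * (d⁄dX ℚ PhiPS) - 42 * PhiPS + 12 * X := by
  suffices h : C 3 * thetaPS =
      C 54 * (X * d⁄dX ℚ PhiPS) - C 2 * d⁄dX ℚ PhiPS - C 42 * PhiPS + C 12 * X by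
    simp only [map_ofNat] at h
    linear_combination h
  ext n
  simp only [map_sub, map_add, coeff_C_mul, coeff_X_mul_derivative, coeff_derivative]
  rcases n with _ | _ | m
  · simp [thetaPS, PhiPS]
  · norm_num [thetaPS, PhiPS, Nat.factorial]
  · have hθ := add_two_mul_coeff_thetaPS m
    have hΦ := add_two_mul_coeff_PhiPS_succ m
    rw [coeff_X, if_neg (by omega)]
    apply mul_left_cancel₀ (show (m + 2 : ℚ) ≠ 0 by positivity)
    push_cast
    linear_combination 3 * hθ + 2 * hΦ
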